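/- arXiv:0911.2569 — 2 statements merged into one kernel-verified Lean document; each statement's English description precedes it below -/
import Mathlib

section
/- One has: c_i > 0 for every 0 ≤ i ≤ ⌊n(d−1)/2⌋; c_i < 0 for every ⌈n(d−1)/2⌉ + 1 ≤ i ≤ n(d−1)+1; and if n(d−1)+1 is even then c_{(n(d−1)+1)/2} = 0. -/
open Polynomial Finset

/-- The geometric-series polynomial `1 + t + ⋯ + t^{d-1}` over `ℤ`. -/
noncomputable def Sgeo (d : ℕ) : Polynomial ℤ := ∑ j ∈ Finset.range d, Polynomial.X ^ j

lemma coeff_Sgeo (d i : ℕ) : (Sgeo d).coeff i = if i < d then 1 else 0 := by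
  simp [Sgeo, finset_sum_coeff, coeff_X_pow, Finset.sum_ite_eq, Finset.mem_range]

lemma natDegree_Sgeo_le (d : ℕ) : (Sgeo d).natDegree ≤ d - 1 := by
  apply natDegree_sum_le_of_forall_le
  intro j hj
  rw [Finset.mem_range] at hj
  simpa using by omega

lemma reflect_Sgeo (d : ℕ) : (Sgeo d).reflect (d - 1) = Sgeo d := by
  ext i
  rw [coeff_reflect]
  rcases le_or_gt i (d - 1) with h | h
  · rw [revAt_le h, coeff_Sgeo, coeff_Sgeo]
    by_cases hi : i < d
    · rw [if_pos (by omega), if_pos hi]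
    · rw [if_neg (by omega), if_neg hi]
  · rw [revAt_eq_self_of_lt h]

lemma natDegree_Sgeo_pow_le (d n : ℕ) : (Sgeo d ^ n).natDegree ≤ n * (d - 1) :=
  natDegree_pow_le.trans (Nat.mul_le_mul_left n (natDegree_Sgeo_le d))

lemma reflect_Sgeo_pow (d : ℕ) : ∀ n, (Sgeo d ^ n).reflect (n * (d - 1)) = Sgeo d ^ n := by
  intro n
  induction n with
  | zero => simp [reflect_one]
  | succ n ih =>
    have h1 : (n + 1) * (d - 1) = n * (d - 1) + (d - 1) := by ring
    rw [pow_succ, h1, reflect_mul _ _ (natDegree_Sgeo_pow_le d n) (natDegree_Sgeo_le d), ih,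
      reflect_Sgeo]

lemma reflect_Qgeo (n d : ℕ) :
    ((1 - X) * Sgeo d ^ n : Polynomial ℤ).reflect (n * (d - 1) + 1)
      = -((1 - X) * Sgeo d ^ n) := by
  have h1 : (1 - X : Polynomial ℤ).natDegree ≤ 1 :=
    (natDegree_sub_le _ _).trans (by simp)
  have h2 := reflect_mul (1 - X : Polynomial ℤ) (Sgeo d ^ n) h1 (natDegree_Sgeo_pow_le d n)
  rw [add_comm] at h2
  rw [h2, reflect_Sgeo_pow, reflect_sub, reflect_one, reflect_one_X]
  ring

/-- Antisymmetry of the coefficients of `(1-X)·(1+⋯+X^{d-1})^n` about the middle. -/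
lemma anti (n d : ℕ) {k : ℕ} (hk : k ≤ n * (d - 1) + 1) :
    ((1 - X) * Sgeo d ^ n : Polynomial ℤ).coeff (n * (d - 1) + 1 - k)
      = -((1 - X) * Sgeo d ^ n : Polynomial ℤ).coeff k := by
  have h := congrArg (fun p : Polynomial ℤ => p.coeff k) (reflect_Qgeo n d)
  simpa [coeff_reflect, revAt_le hk] using h

lemma coeff_mul_Sgeo (d : ℕ) (p : Polynomial ℤ) (i : ℕ) :
    (p * Sgeo d).coeff i = ∑ j ∈ Finset.range d, if j ≤ i then p.coeff (i - j) else 0 := by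
  rw [Sgeo, Finset.mul_sum, finset_sum_coeff]
  exact Finset.sum_congr rfl fun j _ => coeff_mul_X_pow' p j i

/-- Positivity of the coefficients of `(1-X)·(1+⋯+X^{d-1})^n` up to the middle. -/
lemma Qpos (d : ℕ) (hd : 2 ≤ d) :
    ∀ n, 2 ≤ n → ∀ i ≤ n * (d - 1) / 2, 0 < ((1 - X) * Sgeo d ^ n : Polynomial ℤ).coeff i := by
  intro n
  induction n with
  | zero => omega
  | succ m ih =>
    intro hn i hi
    rcases Nat.lt_or_ge m 2 with hm | hm
    · -- base case : m = 1
      have hm1 : m = 1 := by omega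
      subst hm1
      have hgeom : (1 - X : Polynomial ℤ) * Sgeo d = 1 - X ^ d := by
        have h := geom_sum_mul (X : Polynomial ℤ) d
        rw [Sgeo]
        linear_combination -h
      have hQ : ((1 - X) * Sgeo d ^ (1 + 1) : Polynomial ℤ) = Sgeo d - X ^ d * Sgeo d := by
        rw [pow_two, ← mul_assoc, hgeom]
        ring
      have hi' : i < d := by omega
      have h2 : (X ^ d * Sgeo d : Polynomial ℤ).coeff i = 0 := by
        rw [X_pow_mul, coeff_mul_X_pow', if_neg (by omega)]
      rw [hQ, coeff_sub, h2, coeff_Sgeo, if_pos hi']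
      norm_num
    · -- inductive step
      have hMd : (m + 1) * (d - 1) = m * (d - 1) + (d - 1) := by ring
      have hM2 : 2 * (d - 1) ≤ m * (d - 1) := Nat.mul_le_mul_right _ hm
      rw [hMd] at hi
      have hQ : ((1 - X) * Sgeo d ^ (m + 1) : Polynomial ℤ)
          = ((1 - X) * Sgeo d ^ m) * Sgeo d := by ring
      rw [hQ, coeff_mul_Sgeo]
      set M := m * (d - 1) with hMdef
      have hiM : i ≤ M := by omega
      rcases Nat.lt_or_ge (2 * i) (M + 2) with hA | hB
      · -- case A : 2i ≤ M+1, every windowed coefficient is nonnegative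
        apply Finset.sum_pos'
        · intro j hj
          by_cases hji : j ≤ i
          · rw [if_pos hji]
            rcases Nat.lt_or_ge M (2 * (i - j)) with h | h
            · have he : i - j = M + 1 - (i - j) := by omega
              have ha := anti m d (k := i - j) (by omega)
              rw [← he] at ha
              linarith
            · exact le_of_lt (ih hm _ (by omega))
          · rw [if_neg hji]
        · rcases Nat.lt_or_ge M (2 * i) with h | h
          · -- 2i = M+1, witness j = 1
            refine ⟨1, Finset.mem_range.mpr (by omega), ?_⟩
            rw [if_pos (by omega : 1 ≤ i)]
            exact ih hm _ (by omega)
          · -- 2i ≤ M, witness j = 0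
            refine ⟨0, Finset.mem_range.mpr (by omega), ?_⟩
            rw [if_pos (Nat.zero_le _), Nat.sub_zero]
            exact ih hm _ (by omega)
      · -- case B : 2i ≥ M+2, split the window; the right part cancels by antisymmetry
        have hdi : d ≤ i := by omega
        set s := 2 * i - (M + 1) with hsdef
        have hs1 : 1 ≤ s := by omega
        have hs2 : s + 1 ≤ d - 1 := by omega
        have hcongr : ∀ j ∈ Finset.range d,
            (if j ≤ i then ((1 - X) * Sgeo d ^ m : Polynomial ℤ).coeff (i - j) else 0)
              = ((1 - X) * Sgeo d ^ m : Polynomial ℤ).coeff (i - j) := by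
          intro j hj
          rw [Finset.mem_range] at hj
          exact if_pos (by omega)
        rw [Finset.sum_congr rfl hcongr,
          ← Finset.sum_range_add_sum_Ico _ (show s + 1 ≤ d by omega)]
        have hzero : ∑ j ∈ Finset.range (s + 1),
            ((1 - X) * Sgeo d ^ m : Polynomial ℤ).coeff (i - j) = 0 := by
          apply Finset.sum_involution (g := fun j _ => s - j)
          · intro j hj
            rw [Finset.mem_range] at hj
            have key : i - (s - j) = M + 1 - (i - j) := by omega
            rw [key, anti m d (by omega)]
            ring
          · intro j hj hne heq
            apply hne
            rw [Finset.mem_range] at hj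
            have key : i - (s - j) = M + 1 - (i - j) := by omega
            have ha := anti m d (k := i - j) (by omega)
            rw [← key, heq] at ha
            linarith
          · intro j hj
            rw [Finset.mem_range] at *
            omega
          · intro j hj
            rw [Finset.mem_range] at hj
            omega
        rw [hzero, zero_add]
        apply Finset.sum_pos
        · intro j hj
          rw [Finset.mem_Ico] at hj
          exact ih hm _ (by omega)
        · exact ⟨s + 1, Finset.mem_Ico.mpr ⟨le_refl _, by omega⟩⟩

/-- Sign pattern of the coefficients `c_i` of
`(1-t^d)^n/(1-t)^{n-1} = (1-t)·(1 + t + ⋯ + t^{d-1})^n`: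
`c_i > 0` for `0 ≤ i ≤ ⌊n(d-1)/2⌋`, `c_i < 0` for `⌈n(d-1)/2⌉ + 1 ≤ i ≤ n(d-1)+1`,
and `c_{(n(d-1)+1)/2} = 0` if `n(d-1)+1` is even. -/
theorem coeff_sign (n d : ℕ) (hn : 2 ≤ n) (hd : 2 ≤ d) (c : ℕ → ℤ)
    (hc : ∀ i, c i = ((1 - Polynomial.X) *
      (∑ j ∈ Finset.range d, Polynomial.X ^ j) ^ n : Polynomial ℤ).coeff i) :
    (∀ i ≤ n * (d - 1) / 2, 0 < c i) ∧
    (∀ i, (n * (d - 1) + 1) / 2 + 1 ≤ i → i ≤ n * (d - 1) + 1 → c i < 0) ∧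
    (Even (n * (d - 1) + 1) → c ((n * (d - 1) + 1) / 2) = 0) := by
  have hc' : ∀ i, c i = ((1 - X) * Sgeo d ^ n : Polynomial ℤ).coeff i := hc
  refine ⟨fun i hi => (hc' i).symm ▸ Qpos d hd n hn i hi, ?_, ?_⟩
  · intro i h1 h2
    have ha := anti n d (k := i) h2
    have hkey : n * (d - 1) + 1 - i ≤ n * (d - 1) / 2 := by omega
    have hp := Qpos d hd n hn _ hkey
    rw [ha] at hp
    rw [hc' i]
    linarith
  · intro he
    obtain ⟨r, hr⟩ := he
    have h2 : (n * (d - 1) + 1) / 2 ≤ n * (d - 1) + 1 := by omega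
    have ha := anti n d (k := (n * (d - 1) + 1) / 2) h2
    have hkey : n * (d - 1) + 1 - (n * (d - 1) + 1) / 2 = (n * (d - 1) + 1) / 2 := by omega
    rw [hkey] at ha
    rw [hc']
    linarith
end

section
/- Let k ∈ ℤ and t ∈ ℕ. The ℚ-linear map R_k → R_{k+t} given by multiplication by ω^t is injective if 2k + t ≤ d and surjective if 2k + t ≥ d. Explicitly: if 2k + t ≤ d, then every homogeneous polynomial P ∈ ℚ[x_1,…,x_n] of degree k with ω^t·P ∈ (x_1^m,…,x_n^m) satisfies P ∈ (x_1^m,…,x_n^m); if 2k + t ≥ d and k ≥ 0, then for every homogeneous Q ∈ ℚ[x_1,…,x_n] of degree k + t there exists a homogeneous P of degree k with Q − ω^t·P ∈ (x_1^m,…,x_n^m). -/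
/-!
`ℚ[x]/(x^m)` is the irreducible `m`-dimensional `sl₂`-representation, with raising operator `x·`
and lowering operator `x^a ↦ a (m - a) x^(a-1)`. On the tensor product `R` this makes `ω·` the
raising operator and `F = ∑ᵢ ((m - 1) ∂ᵢ - xᵢ ∂ᵢ²)` the lowering one: both preserve the ideal
`(x₁^m, …, x_n^m)`, and `F ω - ω F = d - 2k` on polynomials of degree `k` (Euler's identity).
Iterating, `F ω^(t+1) = ω^(t+1) F + (t+1)(d - 2k - t) ω^t` in degree `k`; applying `F` to
`ω^(t+1) P ∈ I` and inducting on `k` and `t` gives injectivity whenever `2k + t ≤ d`.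

The standard monomials `x^a` (all `aᵢ < m`) of degree `j` form a basis of `R_j`, and
`a ↦ (m - 1, …, m - 1) - a` matches those of degrees `j` and `d - j`. Hence the injective map
`ω^(d-2j) : R_j → R_(d-j)` (`2j ≤ d`) is bijective, and for `2k + t ≥ d` the map
`ω^t : R_k → R_(k+t)` is surjective because `ω^(2(k+t)-d) : R_(d-k-t) → R_(k+t)` factors
through it (while `R_j = 0` for `j > d`).
-/

open MvPolynomial Finset

namespace Lefschetz

noncomputable section

variable {σ R : Type*}

section CommSemiring

variable [CommSemiring R]

def xPowIdeal (σ R : Type*) [CommSemiring R] (m : ℕ) : Ideal (MvPolynomial σ R) :=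
  Ideal.span (Set.range fun i : σ => (X i : MvPolynomial σ R) ^ m)

theorem mem_xPowIdeal_iff {m : ℕ} {P : MvPolynomial σ R} :
    P ∈ xPowIdeal σ R m ↔ ∀ a : σ →₀ ℕ, (∀ i, a i < m) → coeff a P = 0 := by
  have hspan : Set.range (fun i : σ => (X i : MvPolynomial σ R) ^ m)
      = (fun s => monomial s 1) '' Set.range (fun i => Finsupp.single i m) := by
    simp only [← Set.range_comp, Function.comp_def, X_pow_eq_monomial]
  rw [xPowIdeal, hspan, mem_ideal_span_monomial_image]
  simp only [Set.exists_range_iff, Finsupp.single_le_iff, mem_support_iff, ← not_lt,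
    ← not_forall]
  exact forall_congr' fun a => not_imp_comm.trans (by rw [not_not])

theorem degree_eq_of_coeff_ne_zero {P : MvPolynomial σ R} {k : ℕ} (hP : P.IsHomogeneous k)
    {a : σ →₀ ℕ} (ha : coeff a P ≠ 0) : a.degree = k :=
  by_contra fun h => ha (hP.coeff_eq_zero h)

theorem isHomogeneous_of_coeff_ne_zero {P : MvPolynomial σ R} {k : ℕ}
    (h : ∀ a, coeff a P ≠ 0 → a.degree = k) : P.IsHomogeneous k := fun a ha => by
  have hdeg := h a ha
  rw [Finsupp.degree_eq_weight_one] at hdeg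
  exact hdeg

theorem coeff_X_mul_pderiv (i : σ) (a : σ →₀ ℕ) (P : MvPolynomial σ R) :
    coeff a (X i * pderiv i P) = a i * coeff a P := by
  classical
  induction P using MvPolynomial.induction_on' with
  | add p q hp hq => simp only [map_add, mul_add, coeff_add, hp, hq]
  | monomial b r =>
    rw [X_mul_pderiv_monomial, coeff_smul, coeff_monomial]
    split_ifs with hab
    · subst hab; simp [nsmul_eq_mul]
    · simp

def StdExp (σ : Type*) (m j : ℕ) : Type _ := {a : σ →₀ ℕ // (∀ i, a i < m) ∧ a.degree = j}

def stdCoeffs (m j : ℕ) : MvPolynomial σ R →ₗ[R] (StdExp σ m j → R) :=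
  LinearMap.pi fun a => lcoeff R a.1

theorem mem_xPowIdeal_iff_stdCoeffs_eq_zero {m j : ℕ} {P : MvPolynomial σ R}
    (hP : P.IsHomogeneous j) : P ∈ xPowIdeal σ R m ↔ stdCoeffs m j P = 0 := by
  rw [mem_xPowIdeal_iff, funext_iff]
  refine ⟨fun h a => h a.1 a.2.1, fun h a ha => ?_⟩
  by_cases hdeg : a.degree = j
  · exact h ⟨a, ha, hdeg⟩
  · exact hP.coeff_eq_zero hdeg

variable [Fintype σ] {m : ℕ}

instance {j : ℕ} : Fintype (StdExp σ m j) := by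
  classical
  exact Fintype.ofInjective (fun a i => (⟨a.1 i, a.2.1 i⟩ : Fin m)) fun a b hab =>
    Subtype.ext (Finsupp.ext fun i => congrArg Fin.val (congrFun hab i))

def ofStdCoeffs (m j : ℕ) : (StdExp σ m j → R) →ₗ[R] MvPolynomial σ R :=
  Fintype.linearCombination R fun a => monomial a.1 1

theorem stdCoeffs_ofStdCoeffs {j : ℕ} (c : StdExp σ m j → R) :
    stdCoeffs m j (ofStdCoeffs m j c) = c := by
  classical
  ext b
  simp only [stdCoeffs, ofStdCoeffs, LinearMap.pi_apply, lcoeff_apply,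
    Fintype.linearCombination_apply, coeff_sum, coeff_smul, coeff_monomial]
  rw [sum_eq_single b (fun a _ hab => by simp [Subtype.ext_iff.not.mp hab]) (by simp)]
  simp

theorem isHomogeneous_ofStdCoeffs {j : ℕ} (c : StdExp σ m j → R) :
    (ofStdCoeffs m j c).IsHomogeneous j :=
  IsHomogeneous.sum _ _ _ fun a _ => by
    rw [smul_monomial]
    exact isHomogeneous_monomial _ a.2.2

def complExp (m : ℕ) (a : σ →₀ ℕ) : σ →₀ ℕ := Finsupp.equivFunOnFinite.symm fun i => m - 1 - a i

theorem complExp_apply (a : σ →₀ ℕ) (i : σ) : complExp m a i = m - 1 - a i := rfl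

theorem complExp_complExp {a : σ →₀ ℕ} (ha : ∀ i, a i < m) : complExp m (complExp m a) = a :=
  Finsupp.ext fun i => by
    have := ha i
    rw [complExp_apply, complExp_apply]
    omega

theorem degree_complExp_add {a : σ →₀ ℕ} (ha : ∀ i, a i < m) :
    (complExp m a).degree + a.degree = Fintype.card σ * (m - 1) := by
  rw [Finsupp.degree_eq_sum, Finsupp.degree_eq_sum, ← sum_add_distrib, ← smul_eq_mul,
    ← card_univ, ← sum_const]
  exact sum_congr rfl fun i _ => by
    have := ha i
    rw [complExp_apply]
    omega

def StdExp.compl {j j' : ℕ} (h : j + j' = Fintype.card σ * (m - 1)) (a : StdExp σ m j) :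
    StdExp σ m j' :=
  ⟨complExp m a.1, fun i => by rw [complExp_apply]; have := a.2.1 i; omega, by
    have := degree_complExp_add a.2.1
    have := a.2.2
    omega⟩

def StdExp.complEquiv {j j' : ℕ} (h : j + j' = Fintype.card σ * (m - 1)) :
    StdExp σ m j ≃ StdExp σ m j' where
  toFun := StdExp.compl h
  invFun := StdExp.compl (by omega)
  left_inv a := Subtype.ext (complExp_complExp a.2.1)
  right_inv b := Subtype.ext (complExp_complExp b.2.1)

theorem mem_xPowIdeal_of_lt_degree {j : ℕ} (hj : Fintype.card σ * (m - 1) < j)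
    {Q : MvPolynomial σ R} (hQ : Q.IsHomogeneous j) : Q ∈ xPowIdeal σ R m :=
  mem_xPowIdeal_iff.mpr fun a ha => hQ.coeff_eq_zero (by
    have := degree_complExp_add ha
    omega)

def sumX (σ R : Type*) [CommSemiring R] [Fintype σ] : MvPolynomial σ R := ∑ i, X i

theorem pderiv_sumX (i : σ) : pderiv i (sumX σ R) = 1 := by
  classical
  simp [sumX, pderiv_X, Pi.single_apply]

theorem isHomogeneous_sumX : (sumX σ R).IsHomogeneous 1 :=
  IsHomogeneous.sum _ _ _ fun i _ => isHomogeneous_X R i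

theorem isHomogeneous_sumX_pow_mul {P : MvPolynomial σ R} {u j k : ℕ} (hP : P.IsHomogeneous j)
    (h : u + j = k) : (sumX σ R ^ u * P).IsHomogeneous k := by
  have := (isHomogeneous_sumX.pow u).mul hP
  rwa [one_mul, h] at this

end CommSemiring

section CommRing

variable [CommRing R] [Fintype σ] {m : ℕ}

def lowering (m : ℕ) (P : MvPolynomial σ R) : MvPolynomial σ R :=
  ∑ i, (C ((m : R) - 1) * pderiv i P - X i * pderiv i (pderiv i P))

theorem coeff_lowering (a : σ →₀ ℕ) (P : MvPolynomial σ R) :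
    coeff a (lowering m P)
      = ∑ i, ((a i : R) + 1) * ((m : R) - 1 - a i) * coeff (a + Finsupp.single i 1) P := by
  simp only [lowering, coeff_sum, coeff_sub, coeff_C_mul, coeff_X_mul_pderiv, coeff_pderiv]
  exact sum_congr rfl fun i _ => by ring

theorem lowering_mem {P : MvPolynomial σ R} (hP : P ∈ xPowIdeal σ R m) :
    lowering m P ∈ xPowIdeal σ R m := by
  rw [mem_xPowIdeal_iff] at hP ⊢
  intro a ha
  rw [coeff_lowering]
  refine sum_eq_zero fun i _ => ?_
  by_cases him : a i + 1 < m
  · have hstd : ∀ j, (a + Finsupp.single i 1 : σ →₀ ℕ) j < m := fun j => by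
      rcases eq_or_ne i j with rfl | hij
      · simpa using him
      · simpa [Finsupp.single_apply, hij] using ha j
    rw [hP _ hstd, mul_zero]
  · -- the top exponent `a i = m - 1` is killed by the factor `m - 1 - a i`
    have hm : a i + 1 = m := by have := ha i; omega
    rw [← hm]; push_cast; ring

theorem degree_add_one_of_coeff_lowering_ne_zero {P : MvPolynomial σ R} {j : ℕ}
    (hP : P.IsHomogeneous j) {a : σ →₀ ℕ} (ha : coeff a (lowering m P) ≠ 0) :
    a.degree + 1 = j := by
  rw [coeff_lowering] at ha
  obtain ⟨i, -, hi⟩ := exists_ne_zero_of_sum_ne_zero ha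
  have hdeg := degree_eq_of_coeff_ne_zero hP (right_ne_zero_of_mul hi)
  rwa [map_add, Finsupp.degree_single] at hdeg

theorem isHomogeneous_lowering {P : MvPolynomial σ R} {k : ℕ} (hP : P.IsHomogeneous (k + 1)) :
    (lowering m P).IsHomogeneous k :=
  isHomogeneous_of_coeff_ne_zero fun _ ha => by
    have := degree_add_one_of_coeff_lowering_ne_zero hP ha
    omega

theorem lowering_eq_zero_of_isHomogeneous_zero {P : MvPolynomial σ R} (hP : P.IsHomogeneous 0) :
    lowering m P = 0 :=
  MvPolynomial.ext _ _ fun _ => by_contra fun ha => by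
    have := degree_add_one_of_coeff_lowering_ne_zero hP ha
    omega

theorem lowering_sumX_mul {P : MvPolynomial σ R} {k : ℕ} (hP : P.IsHomogeneous k) :
    lowering m (sumX σ R * P)
      = sumX σ R * lowering m P + C ((Fintype.card σ : R) * ((m : R) - 1) - 2 * k) * P := by
  have hterm : ∀ i, C ((m : R) - 1) * pderiv i (sumX σ R * P)
        - X i * pderiv i (pderiv i (sumX σ R * P))
      = sumX σ R * (C ((m : R) - 1) * pderiv i P - X i * pderiv i (pderiv i P))
        + (C ((m : R) - 1) * P - 2 * (X i * pderiv i P)) := fun i => by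
    simp only [pderiv_mul, pderiv_sumX, map_add, one_mul]
    ring
  simp only [lowering, hterm, sum_add_distrib, ← mul_sum, sum_sub_distrib,
    hP.sum_X_mul_pderiv, sum_const, card_univ]
  simp only [map_sub, map_mul, map_natCast, nsmul_eq_mul, map_ofNat]
  ring

theorem lowering_sumX_pow_succ_mul (t : ℕ) {P : MvPolynomial σ R} {k : ℕ}
    (hP : P.IsHomogeneous k) :
    lowering m (sumX σ R ^ (t + 1) * P) = sumX σ R ^ (t + 1) * lowering m P
      + C (((t : R) + 1) * ((Fintype.card σ : R) * ((m : R) - 1) - 2 * k - t))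
        * (sumX σ R ^ t * P) := by
  induction t generalizing k P with
  | zero => simpa using lowering_sumX_mul hP
  | succ t ih =>
    have hωP := isHomogeneous_sumX_pow_mul (u := 1) hP (add_comm 1 k)
    rw [pow_one] at hωP
    rw [pow_succ, mul_assoc, ih hωP, lowering_sumX_mul hP]
    simp only [map_add, map_mul, map_sub, map_natCast, map_one, map_ofNat, Nat.cast_add,
      Nat.cast_one]
    ring

end CommRing

section Field

variable {K : Type*} [Field K] [CharZero K]

theorem commutator_scalar_ne_zero {n m k t : ℕ} (h : 2 * k + t + 1 ≤ n * (m - 1)) :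
    ((t : K) + 1) * ((n : K) * ((m : K) - 1) - 2 * k - t) ≠ 0 := by
  have hm : 1 ≤ m := by
    rcases m with _ | m
    · simp at h
    · omega
  have hcast : ((t : K) + 1) * ((n : K) * ((m : K) - 1) - 2 * k - t)
      = (((t + 1) * (n * (m - 1) - 2 * k - t) : ℕ) : K) := by
    push_cast [Nat.cast_sub hm, Nat.cast_sub (by omega : 2 * k ≤ n * (m - 1)),
      Nat.cast_sub (by omega : t ≤ n * (m - 1) - 2 * k)]
    ring
  rw [hcast, Nat.cast_ne_zero]
  exact mul_ne_zero t.succ_ne_zero (by omega)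

variable [Fintype σ] {m : ℕ}

theorem mem_of_sumX_pow_mul_mem {k t : ℕ} (hkt : 2 * k + t ≤ Fintype.card σ * (m - 1))
    {P : MvPolynomial σ K} (hP : P.IsHomogeneous k) (h : sumX σ K ^ t * P ∈ xPowIdeal σ K m) :
    P ∈ xPowIdeal σ K m := by
  set I := xPowIdeal σ K m
  induction k using Nat.strong_induction_on generalizing t P with
  | _ k ihk =>
  induction t with
  | zero => simpa using h
  | succ t iht =>
    have hlow : lowering m P ∈ I := by
      rcases k with _ | k
      · rw [lowering_eq_zero_of_isHomogeneous_zero hP]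
        exact I.zero_mem
      · refine ihk k (by omega) (t := t + 2) (by omega) (isHomogeneous_lowering hP) ?_
        have := lowering_mem (I.mul_mem_left (sumX σ K) h)
        rw [← mul_assoc, ← pow_succ', lowering_sumX_pow_succ_mul (t + 1) hP] at this
        exact (I.add_mem_iff_left (I.mul_mem_left _ h)).mp this
    have := lowering_mem h
    rw [lowering_sumX_pow_succ_mul t hP] at this
    have hc := (I.add_mem_iff_right (I.mul_mem_left _ hlow)).mp this
    exact iht (by omega) ((I.unit_mul_mem_iff_mem
      ((commutator_scalar_ne_zero (by omega)).isUnit.map C)).mp hc)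

theorem exists_sub_sumX_pow_mul_mem {j j' : ℕ} (hd : j' + j = Fintype.card σ * (m - 1))
    (hle : j' ≤ j) {Q : MvPolynomial σ K} (hQ : Q.IsHomogeneous j) :
    ∃ P : MvPolynomial σ K, P.IsHomogeneous j' ∧
      Q - sumX σ K ^ (j - j') * P ∈ xPowIdeal σ K m := by
  have hprod (c : StdExp σ m j' → K) :
      (sumX σ K ^ (j - j') * ofStdCoeffs m j' c).IsHomogeneous j :=
    isHomogeneous_sumX_pow_mul (isHomogeneous_ofStdCoeffs c) (Nat.sub_add_cancel hle)
  let Φ := stdCoeffs m j ∘ₗ LinearMap.mulLeft K (sumX σ K ^ (j - j')) ∘ₗ ofStdCoeffs m j'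
  have hinj : Function.Injective Φ := by
    rw [← LinearMap.ker_eq_bot, LinearMap.ker_eq_bot']
    intro c hc
    have hmem := (mem_xPowIdeal_iff_stdCoeffs_eq_zero (hprod c)).mpr hc
    have hc0 := mem_of_sumX_pow_mul_mem (by omega) (isHomogeneous_ofStdCoeffs c) hmem
    rwa [mem_xPowIdeal_iff_stdCoeffs_eq_zero (isHomogeneous_ofStdCoeffs c),
      stdCoeffs_ofStdCoeffs] at hc0
  have hdim : Module.finrank K (StdExp σ m j' → K) = Module.finrank K (StdExp σ m j → K) := by
    simp only [Module.finrank_fintype_fun_eq_card, Fintype.card_congr (StdExp.complEquiv hd)]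
  obtain ⟨c, hc⟩ := (LinearMap.injective_iff_surjective_of_finrank_eq_finrank hdim).mp hinj
    (stdCoeffs m j Q)
  refine ⟨ofStdCoeffs m j' c, isHomogeneous_ofStdCoeffs c, ?_⟩
  rw [mem_xPowIdeal_iff_stdCoeffs_eq_zero (hQ.sub (hprod c)), map_sub, ← hc]
  exact sub_self _

end Field

end

end Lefschetz

open Lefschetz in
/-- Hard-Lefschetz-type theorem for `R = ℚ[x₁,…,x_n]/(x₁^m,…,x_n^m)`, `ω = x₁ + ⋯ + x_n`,
`d = n(m-1)`: multiplication by `ω^t : R_k → R_{k+t}` is injective if `2k + t ≤ d` and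
surjective if `2k + t ≥ d`. -/
theorem lefschetz (n m : ℕ) (k t : ℕ)
    (Im : Ideal (MvPolynomial (Fin n) ℚ))
    (hIm : Im = Ideal.span (Set.range fun i : Fin n => (X i : MvPolynomial (Fin n) ℚ) ^ m))
    (ω : MvPolynomial (Fin n) ℚ) (hω : ω = ∑ i, X i) :
    (2 * k + t ≤ n * (m - 1) →
      ∀ P : MvPolynomial (Fin n) ℚ, P.IsHomogeneous k → ω ^ t * P ∈ Im → P ∈ Im) ∧
    (n * (m - 1) ≤ 2 * k + t →
      ∀ Q : MvPolynomial (Fin n) ℚ, Q.IsHomogeneous (k + t) →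
        ∃ P : MvPolynomial (Fin n) ℚ, P.IsHomogeneous k ∧ Q - ω ^ t * P ∈ Im) := by
  obtain rfl : Im = xPowIdeal (Fin n) ℚ m := hIm
  obtain rfl : ω = sumX (Fin n) ℚ := hω
  have hd : Fintype.card (Fin n) * (m - 1) = n * (m - 1) := by rw [Fintype.card_fin]
  refine ⟨fun hkt P hP => mem_of_sumX_pow_mul_mem (hd ▸ hkt) hP, fun hkt Q hQ => ?_⟩
  rcases le_or_gt (k + t) (n * (m - 1)) with hle | hgt
  · obtain ⟨P, hP, hmem⟩ := exists_sub_sumX_pow_mul_mem (m := m)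
      (j' := n * (m - 1) - (k + t)) (by rw [hd]; omega) (by omega) hQ
    refine ⟨sumX (Fin n) ℚ ^ (2 * k + t - n * (m - 1)) * P, ?_, ?_⟩
    · exact isHomogeneous_sumX_pow_mul hP (by omega)
    · rwa [← mul_assoc, ← pow_add, show t + (2 * k + t - n * (m - 1))
        = k + t - (n * (m - 1) - (k + t)) by omega]
  · exact ⟨0, isHomogeneous_zero _ _ _, by
      simpa using mem_xPowIdeal_of_lt_degree (hd ▸ hgt) hQ⟩
end
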